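/- Let S, T be isometries on a Hilbert space H satisfying the doubly twisted commutation relation S*T = λ̄ T S* for some complex number λ with |λ| = 1. Then the defect projections 1 - SS* and 1 - TT* commute. -/

import Mathlib

/-!
Write `p = S S*` and `q = T T*` for the range projections. By associativity
`(p q)² = S x x* x T*` with `x = S* T`, and the twisted relation makes `x = λ̄ T S*` a partial
isometry (`x x* x = x`), so `p q` is idempotent. An idempotent product of two projections in a
C⋆-algebra is self-adjoint, so `p` and `q` commute, and hence so do `1 - p` and `1 - q`.
-/

theorem isStarProjection_mul_star_of_star_mul_self {R : Type*} [Monoid R] [StarMul R] {s : R}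
    (hs : star s * s = 1) : IsStarProjection (s * star s) where
  isIdempotentElem := by
    rw [IsIdempotentElem, mul_assoc, ← mul_assoc (star s), hs, one_mul]
  isSelfAdjoint := by
    rw [IsSelfAdjoint, star_mul, star_star]

theorem isIdempotentElem_mul_star_mul_mul_star {R : Type*} [Monoid R] [StarMul R] {s t : R}
    (h : star s * t * star (star s * t) * (star s * t) = star s * t) :
    IsIdempotentElem (s * star s * (t * star t)) := by
  rw [star_mul, star_star] at h
  calc s * star s * (t * star t) * (s * star s * (t * star t))
      = s * (star s * t * (star t * s) * (star s * t)) * star t := by simp only [mul_assoc]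
    _ = s * star s * (t * star t) := by rw [h]; simp only [mul_assoc]

theorem star_mul_mul_star_mul_eq_of_twisted {R : Type*} [Monoid R] [StarMul R] [MulAction ℂ R]
    [IsScalarTower ℂ R R] [SMulCommClass ℂ R R] [StarModule ℂ R] {s t : R} {l : ℂ}
    (hl : star l * l = 1) (hs : star s * s = 1) (ht : star t * t = 1)
    (hrel : star s * t = star l • (t * star s)) :
    star s * t * star (star s * t) * (star s * t) = star s * t := by
  have hcancel : t * star s * star (t * star s) * (t * star s) = t * star s := by
    simp only [star_mul, star_star, mul_assoc]
    rw [← mul_assoc (star s) s, hs, one_mul, ← mul_assoc (star t) t, ht, one_mul]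
  rw [hrel, star_smul, star_star, smul_mul_smul_comm, smul_mul_smul_comm, hcancel, hl, one_mul]

theorem IsStarProjection.commute_of_isIdempotentElem_mul {R : Type*} [NonUnitalNormedRing R]
    [StarRing R] [CStarRing R] {p q : R} (hp : IsStarProjection p) (hq : IsStarProjection q)
    (hpq : IsIdempotentElem (p * q)) : Commute p q := by
  have hp' : ∀ x, p * (p * x) = p * x := fun x => by rw [← mul_assoc, hp.isIdempotentElem.eq]
  have hq' : ∀ x, q * (q * x) = q * x := fun x => by rw [← mul_assoc, hq.isIdempotentElem.eq]
  have hpq' : p * (q * (p * q)) = p * q := by rw [← mul_assoc, hpq.eq]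
  -- `p q - q p q = (1 - q) p q` has `C⋆`-norm zero, since `q p (1 - q) p q = q p q - q (p q)² = 0`.
  have hzero : star (p * q - q * (p * q)) * (p * q - q * (p * q)) = 0 := by
    simp only [star_sub, star_mul, hp.isSelfAdjoint.star_eq, hq.isSelfAdjoint.star_eq, sub_mul,
      mul_sub, mul_assoc, hp', hq', hpq', sub_self]
  have hleft : p * q = q * (p * q) :=
    sub_eq_zero.mp ((CStarRing.star_mul_self_eq_zero_iff _).mp hzero)
  have hsa : star (p * q) = p * q := by
    rw [hleft, star_mul, star_mul, hp.isSelfAdjoint.star_eq, hq.isSelfAdjoint.star_eq, mul_assoc]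
  rw [commute_iff_eq, ← hsa, star_mul, hp.isSelfAdjoint.star_eq, hq.isSelfAdjoint.star_eq]

/-- For isometries `S, T` on a Hilbert space with `S* T = λ̄ T S*` (|λ| = 1),
the defect projections `1 - S S*` and `1 - T T*` commute. -/
theorem stmt_2 {H : Type*} [NormedAddCommGroup H] [InnerProductSpace ℂ H]
    [CompleteSpace H] (S T : H →L[ℂ] H) (l : ℂ) (hl : ‖l‖ = 1)
    (hS : star S * S = 1) (hT : star T * T = 1)
    (hrel : star S * T = star l • (T * star S)) :
    (1 - S * star S) * (1 - T * star T) = (1 - T * star T) * (1 - S * star S) := by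
  have hl' : star l * l = 1 := by
    rw [Complex.star_def, Complex.conj_mul', hl]
    norm_num
  have hcomm : Commute (S * star S) (T * star T) :=
    (isStarProjection_mul_star_of_star_mul_self hS).commute_of_isIdempotentElem_mul
      (isStarProjection_mul_star_of_star_mul_self hT)
      (isIdempotentElem_mul_star_mul_mul_star
        (star_mul_mul_star_mul_eq_of_twisted hl' hS hT hrel))
  exact ((Commute.one_right _).sub_right ((Commute.one_left _).sub_left hcomm)).eq
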